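/- arXiv:2312.16585 — 3 statements merged into one kernel-verified Lean document; each statement's English description precedes it below -/
import Mathlib

section
/- For real y with 0 < |y| < 1 and natural number n, ∫_ℝ |x|^n / (exp(x²/2) − y) dx = 2^{(n+1)/2} Γ((n+1)/2) Li_{(n+1)/2}(y) / y, where Li_s(y) = ∑_{k=1}^∞ y^k/k^s. -/
/-!
Since `exp (x² / 2) ≥ 1 > |y|`, the integrand expands as the geometric series
`|x|ⁿ / (exp (x² / 2) - y) = ∑_{k ≥ 0} yᵏ |x|ⁿ exp (-(k + 1) x² / 2)`. Each term is a Gaussian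
moment, `∫ |x|ⁿ exp (-(k + 1) x² / 2) dx = 2ˢ Γ(s) / (k + 1)ˢ` with `s = (n + 1) / 2`, and the
integrals of the absolute values of the terms are dominated by a geometric series in `|y|`, so the
sum and the integral may be exchanged. What remains is `2ˢ Γ(s) ∑_k yᵏ / (k + 1)ˢ = 2ˢ Γ(s) Li_s(y) / y`.
-/

open Real MeasureTheory

/-- The polylogarithm `Li_s(y) = ∑_{k=1}^∞ y^k / k^s`. -/
noncomputable def Li (s y : ℝ) : ℝ := ∑' k : ℕ, y ^ (k + 1) / ((k + 1 : ℕ) : ℝ) ^ s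

theorem integral_abs_rpow_mul_exp_neg_mul_sq {b q : ℝ} (hb : 0 < b) (hq : -1 < q) :
    ∫ x : ℝ, |x| ^ q * exp (-b * x ^ 2) = b ^ (-(q + 1) / 2) * Gamma ((q + 1) / 2) := by
  have h_half := integral_rpow_mul_exp_neg_mul_rpow two_pos hq hb
  have h_abs := integral_comp_abs (f := fun x => x ^ q * exp (-b * x ^ 2))
  simp only [rpow_two] at h_half
  simp only [sq_abs] at h_abs
  rw [h_abs, h_half]
  ring

-- A non-integrable function has Bochner integral `0`, so the positive value above forces integrability.
theorem integrable_abs_rpow_mul_exp_neg_mul_sq {b q : ℝ} (hb : 0 < b) (hq : -1 < q) :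
    Integrable fun x : ℝ => |x| ^ q * exp (-b * x ^ 2) := by
  refine Integrable.of_integral_ne_zero ?_
  rw [integral_abs_rpow_mul_exp_neg_mul_sq hb hq]
  have hs : 0 < (q + 1) / 2 := by linarith
  exact (mul_pos (rpow_pos_of_pos hb _) (Gamma_pos_of_pos hs)).ne'

section GaussianMoments

variable (n k : ℕ)

theorem integrable_abs_pow_mul_exp_neg_succ_div_two_mul_sq :
    Integrable fun x : ℝ => |x| ^ n * exp (-(((k : ℝ) + 1) / 2) * x ^ 2) := by
  have h := integrable_abs_rpow_mul_exp_neg_mul_sq (b := ((k : ℝ) + 1) / 2) (q := n)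
    (by positivity) (by linarith [n.cast_nonneg (α := ℝ)])
  simpa only [rpow_natCast] using h

theorem integral_abs_pow_mul_exp_neg_succ_div_two_mul_sq :
    ∫ x : ℝ, |x| ^ n * exp (-(((k : ℝ) + 1) / 2) * x ^ 2) =
      2 ^ (((n : ℝ) + 1) / 2) * Gamma (((n : ℝ) + 1) / 2) /
        ((k : ℝ) + 1) ^ (((n : ℝ) + 1) / 2) := by
  have h := integral_abs_rpow_mul_exp_neg_mul_sq (b := ((k : ℝ) + 1) / 2) (q := n)
    (by positivity) (by linarith [n.cast_nonneg (α := ℝ)])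
  simp only [rpow_natCast] at h
  rw [h, neg_div, rpow_neg (by positivity), ← inv_rpow (by positivity), inv_div,
    div_rpow zero_le_two (by positivity)]
  ring

end GaussianMoments

theorem hasSum_inv_exp_sub {t y : ℝ} (h : |y| < exp t) :
    HasSum (fun k : ℕ => y ^ k * exp (-(k + 1) * t)) (exp t - y)⁻¹ := by
  have hr : |y * exp (-t)| < 1 := by
    rw [abs_mul, abs_of_pos (exp_pos _), exp_neg, ← div_eq_mul_inv, div_lt_one (exp_pos t)]
    exact h
  have h_term (k : ℕ) : y ^ k * exp (-(k + 1) * t) = exp (-t) * (y * exp (-t)) ^ k := by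
    rw [mul_pow, ← exp_nat_mul, mul_left_comm, ← exp_add]
    ring_nf
  have h_sum : (exp t - y)⁻¹ = exp (-t) * (1 - y * exp (-t))⁻¹ := by
    rw [exp_neg, ← mul_inv, mul_sub, mul_one, mul_comm y, ← mul_assoc,
      mul_inv_cancel₀ (exp_pos t).ne', one_mul]
  simpa only [h_term, h_sum] using (hasSum_geometric_of_abs_lt_one hr).mul_left (exp (-t))

theorem hasSum_div_exp_half_sq_sub {y : ℝ} (hy : |y| < 1) (a x : ℝ) :
    HasSum (fun k : ℕ => y ^ k * (a * exp (-(((k : ℝ) + 1) / 2) * x ^ 2)))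
      (a / (exp (x ^ 2 / 2) - y)) := by
  have h_lt : |y| < exp (x ^ 2 / 2) := hy.trans_le (one_le_exp (by positivity))
  have h_term (k : ℕ) : y ^ k * (a * exp (-(((k : ℝ) + 1) / 2) * x ^ 2)) =
      a * (y ^ k * exp (-(k + 1) * (x ^ 2 / 2))) := by
    ring_nf
  rw [div_eq_mul_inv a]
  simpa only [h_term] using (hasSum_inv_exp_sub h_lt).mul_left a

theorem summable_pow_div_rpow_succ {r s : ℝ} (hr₀ : 0 ≤ r) (hr₁ : r < 1) (hs : 0 ≤ s) :
    Summable fun k : ℕ => r ^ k / ((k : ℝ) + 1) ^ s :=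
  .of_nonneg_of_le (fun k => by positivity)
    (fun k => div_le_self (by positivity) (one_le_rpow (by linarith) hs))
    (summable_geometric_of_lt_one hr₀ hr₁)

theorem Li_div_eq_tsum (s : ℝ) {y : ℝ} (hy : y ≠ 0) :
    Li s y / y = ∑' k : ℕ, y ^ k / ((k : ℝ) + 1) ^ s := by
  rw [Li, div_eq_iff hy, ← tsum_mul_right]
  congr 1 with k
  push_cast
  ring

theorem integral_abs_pow_div_exp_sub (y : ℝ) (hy : 0 < |y|) (hy1 : |y| < 1) (n : ℕ) :
    ∫ x : ℝ, |x| ^ n / (Real.exp (x ^ 2 / 2) - y) =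
      2 ^ (((n : ℝ) + 1) / 2) * Real.Gamma (((n : ℝ) + 1) / 2) *
        Li (((n : ℝ) + 1) / 2) y / y := by
  set s : ℝ := ((n : ℝ) + 1) / 2
  set C : ℝ := 2 ^ s * Gamma s
  set F : ℕ → ℝ → ℝ := fun k x => y ^ k * (|x| ^ n * exp (-(((k : ℝ) + 1) / 2) * x ^ 2))
  have h_integrable (k : ℕ) : Integrable (F k) :=
    (integrable_abs_pow_mul_exp_neg_succ_div_two_mul_sq n k).const_mul _
  have h_integral (k : ℕ) : ∫ x, F k x = C * (y ^ k / ((k : ℝ) + 1) ^ s) := by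
    rw [integral_const_mul, integral_abs_pow_mul_exp_neg_succ_div_two_mul_sq]
    ring
  have h_summable : Summable fun k => ∫ x, ‖F k x‖ := by
    refine ((summable_pow_div_rpow_succ (s := s) (abs_nonneg y) hy1 (by positivity)).mul_left C).congr
      fun k => ?_
    simp only [F, norm_mul, norm_pow, Real.norm_eq_abs, abs_abs, abs_of_pos (exp_pos _)]
    rw [integral_const_mul, integral_abs_pow_mul_exp_neg_succ_div_two_mul_sq]
    ring
  calc ∫ x : ℝ, |x| ^ n / (exp (x ^ 2 / 2) - y)
      = ∫ x, ∑' k, F k x := by simp only [F, (hasSum_div_exp_half_sq_sub hy1 _ _).tsum_eq]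
    _ = ∑' k : ℕ, C * (y ^ k / ((k : ℝ) + 1) ^ s) := by
        rw [← (hasSum_integral_of_summable_integral_norm h_integrable h_summable).tsum_eq]
        simp only [h_integral]
    _ = C * Li s y / y := by
        rw [mul_div_assoc, Li_div_eq_tsum s (abs_pos.mp hy), tsum_mul_left]
end

section
/- Let θ₀ > 0 and let f : ℝ³ → ℝ be a nonnegative integrable function with f(v) ≤ 1/θ₀ for all v, ∫ f dv = ρ > 0, ∫ v f(v) dv = 0, and ∫ |v|² f(v) dv = 2ρe₀ with e₀ > 0. Then θ₀ ρ (3/(4π e₀))^{3/2} ≤ (5/3)√(10/π). -/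
open Real MeasureTheory Metric Module

/-!
Among all densities `0 ≤ g ≤ c` of given mass, the second moment `∫ ‖x‖² g` is smallest for the
saturated ball `c · 1_{‖x‖ ≤ R}` (bathtub principle), because pointwise
`(‖x‖² - R²) (g - c · 1_{‖x‖ ≤ R}) ≥ 0`. In `ℝ³`, with `c = 1/θ₀` and `(4π/3) R³ = θ₀ ρ`, this gives
`2 ρ e₀ ≥ (3/5) ρ R²`, i.e. `e₀ ≥ 3R²/10`; substituting `R³ = 3θ₀ρ/(4π)` gives the bound.
-/

section Bathtub

variable {α : Type*} [MeasurableSpace α] {μ : Measure α}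

theorem integral_mul_le_integral_mul_of_sub_mul_sub_nonneg {w g h : α → ℝ} (r : ℝ)
    (hg : Integrable g μ) (hh : Integrable h μ) (hwg : Integrable (fun x ↦ w x * g x) μ)
    (hwh : Integrable (fun x ↦ w x * h x) μ) (hmass : ∫ x, g x ∂μ = ∫ x, h x ∂μ)
    (hsign : ∀ x, 0 ≤ (w x - r) * (g x - h x)) :
    ∫ x, w x * h x ∂μ ≤ ∫ x, w x * g x ∂μ := by
  have hgh : Integrable (fun x ↦ r * (g x - h x)) μ := (hg.sub hh).const_mul r
  calc ∫ x, w x * h x ∂μ ≤ ∫ x, (w x * g x - r * (g x - h x)) ∂μ :=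
        integral_mono hwh (hwg.sub hgh) fun x ↦ by nlinarith [hsign x]
    _ = ∫ x, w x * g x ∂μ := by
        rw [integral_sub hwg hgh, integral_const_mul, integral_sub hg hh, hmass, sub_self,
          mul_zero, sub_zero]

end Bathtub

section FermiBall

variable {E : Type*} [NormedAddCommGroup E] [NormedSpace ℝ E] [FiniteDimensional ℝ E]
  [MeasurableSpace E] [BorelSpace E] (μ : Measure E) [μ.IsAddHaarMeasure]

theorem integral_norm_sq_mul_indicator_closedBall_le {g : E → ℝ} {c R : ℝ} (hR : 0 ≤ R)
    (hg_nonneg : ∀ x, 0 ≤ g x) (hg_le : ∀ x, g x ≤ c) (hg : Integrable g μ)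
    (hwg : Integrable (fun x ↦ ‖x‖ ^ 2 * g x) μ)
    (hmass : ∫ x, g x ∂μ = ∫ x, (closedBall (0 : E) R).indicator (fun _ ↦ c) x ∂μ) :
    ∫ x, ‖x‖ ^ 2 * (closedBall (0 : E) R).indicator (fun _ ↦ c) x ∂μ
      ≤ ∫ x, ‖x‖ ^ 2 * g x ∂μ := by
  have hintegrable {φ : E → ℝ} (hφ : Continuous φ) :
      Integrable ((closedBall (0 : E) R).indicator φ) μ :=
    (integrable_indicator_iff measurableSet_closedBall).2
      (hφ.continuousOn.integrableOn_compact (isCompact_closedBall 0 R))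
  refine integral_mul_le_integral_mul_of_sub_mul_sub_nonneg (R ^ 2) hg
    (hintegrable continuous_const) hwg ?_ hmass fun x ↦ ?_
  · exact (hintegrable (φ := fun x ↦ ‖x‖ ^ 2 * c) (by fun_prop)).congr
      (ae_of_all _ fun x ↦ Set.indicator_mul_right _ _ _)
  by_cases hx : ‖x‖ ≤ R
  · rw [Set.indicator_of_mem (mem_closedBall_zero_iff.2 hx)]
    exact mul_nonneg_of_nonpos_of_nonpos
      (sub_nonpos.2 (pow_le_pow_left₀ (norm_nonneg x) hx 2)) (sub_nonpos.2 (hg_le x))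
  · rw [Set.indicator_of_notMem (mt mem_closedBall_zero_iff.1 hx), sub_zero]
    exact mul_nonneg (sub_nonneg.2 (pow_le_pow_left₀ hR (not_le.1 hx).le 2)) (hg_nonneg x)

variable [Nontrivial E]

theorem integral_norm_sq_mul_indicator_closedBall {R : ℝ} (hR : 0 ≤ R) (c : ℝ) :
    ∫ x, ‖x‖ ^ 2 * (closedBall (0 : E) R).indicator (fun _ ↦ c) x ∂μ
      = c * (finrank ℝ E / (finrank ℝ E + 2)) * μ.real (ball 0 1) * R ^ (finrank ℝ E + 2) := by
  have hradial : ∀ x : E, ‖x‖ ^ 2 * (closedBall (0 : E) R).indicator (fun _ ↦ c) x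
      = (Set.Iic R).indicator (fun y ↦ c * y ^ 2) ‖x‖ := by
    intro x
    by_cases hx : ‖x‖ ≤ R <;> simp [hx, mul_comm]
  simp_rw [hradial]
  rw [integral_fun_norm_addHaar μ]
  obtain ⟨n, hn⟩ := Nat.exists_eq_add_one_of_ne_zero (finrank_pos (R := ℝ) (M := E)).ne'
  have hpow : ∀ y : ℝ, y ^ n • (Set.Iic R).indicator (fun y ↦ c * y ^ 2) y
      = (Set.Iic R).indicator (fun y ↦ c * y ^ (n + 2)) y := by
    intro y
    by_cases hy : y ≤ R <;> simp [hy, pow_add]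
    ring
  simp_rw [hn, Nat.add_sub_cancel, hpow]
  rw [setIntegral_indicator measurableSet_Iic, Set.Ioi_inter_Iic,
    ← intervalIntegral.integral_of_le hR, intervalIntegral.integral_const_mul, integral_pow]
  simp only [smul_eq_mul, nsmul_eq_mul]
  push_cast
  field_simp
  ring

theorem mul_integral_le_integral_norm_sq_mul {g : E → ℝ} {c R : ℝ} (hR : 0 ≤ R)
    (hg_nonneg : ∀ x, 0 ≤ g x) (hg_le : ∀ x, g x ≤ c) (hg : Integrable g μ)
    (hwg : Integrable (fun x ↦ ‖x‖ ^ 2 * g x) μ)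
    (hmass : ∫ x, g x ∂μ = c * μ.real (closedBall (0 : E) R)) :
    finrank ℝ E / (finrank ℝ E + 2) * R ^ 2 * ∫ x, g x ∂μ ≤ ∫ x, ‖x‖ ^ 2 * g x ∂μ := by
  have hball : ∫ x, (closedBall (0 : E) R).indicator (fun _ ↦ c) x ∂μ = ∫ x, g x ∂μ := by
    rw [integral_indicator_const _ measurableSet_closedBall, smul_eq_mul, hmass, mul_comm]
  calc finrank ℝ E / (finrank ℝ E + 2) * R ^ 2 * ∫ x, g x ∂μ
      = c * (finrank ℝ E / (finrank ℝ E + 2)) * μ.real (ball 0 1) * R ^ (finrank ℝ E + 2) := by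
        rw [hmass, Measure.addHaar_real_closedBall μ 0 hR]; ring
    _ = ∫ x, ‖x‖ ^ 2 * (closedBall (0 : E) R).indicator (fun _ ↦ c) x ∂μ :=
        (integral_norm_sq_mul_indicator_closedBall μ hR c).symm
    _ ≤ ∫ x, ‖x‖ ^ 2 * g x ∂μ :=
        integral_norm_sq_mul_indicator_closedBall_le μ hR hg_nonneg hg_le hg hwg hball.symm

end FermiBall

theorem three_fifths_mul_sq_mul_integral_le_integral_sum_sq_mul {f : (Fin 3 → ℝ) → ℝ} {c R : ℝ}
    (hR : 0 ≤ R) (hf_nonneg : ∀ v, 0 ≤ f v) (hf_le : ∀ v, f v ≤ c) (hf : Integrable f)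
    (hwf : Integrable (fun v ↦ (∑ d, v d ^ 2) * f v))
    (hmass : ∫ v, f v = c * (4 * π / 3 * R ^ 3)) :
    3 / 5 * R ^ 2 * ∫ v, f v ≤ ∫ v, (∑ d, v d ^ 2) * f v := by
  have hofLp := EuclideanSpace.volume_preserving_symm_measurableEquiv_toLp (Fin 3)
  have hnorm (x : EuclideanSpace ℝ (Fin 3)) :
      ‖x‖ ^ 2 * f x.ofLp = (∑ d, x.ofLp d ^ 2) * f x.ofLp := by
    rw [EuclideanSpace.real_norm_sq_eq]
  have hf_comp : Integrable (fun x : EuclideanSpace ℝ (Fin 3) ↦ f x.ofLp) :=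
    (hofLp.integrable_comp_emb (MeasurableEquiv.measurableEmbedding _)).2 hf
  have hwf_comp : Integrable (fun x : EuclideanSpace ℝ (Fin 3) ↦ ‖x‖ ^ 2 * f x.ofLp) := by
    simp_rw [hnorm]
    exact (hofLp.integrable_comp_emb (MeasurableEquiv.measurableEmbedding _)
      (g := fun v ↦ (∑ d, v d ^ 2) * f v)).2 hwf
  have hmass_comp : ∫ x : EuclideanSpace ℝ (Fin 3), f x.ofLp = ∫ v, f v := hofLp.integral_comp' f
  have henergy_comp : ∫ x : EuclideanSpace ℝ (Fin 3), ‖x‖ ^ 2 * f x.ofLp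
      = ∫ v, (∑ d, v d ^ 2) * f v := by
    simp_rw [hnorm]; exact hofLp.integral_comp' (fun v ↦ (∑ d, v d ^ 2) * f v)
  have hsaturated : ∫ x : EuclideanSpace ℝ (Fin 3), f x.ofLp
      = c * volume.real (closedBall (0 : EuclideanSpace ℝ (Fin 3)) R) := by
    rw [hmass_comp, hmass, measureReal_def, EuclideanSpace.volume_closedBall_fin_three,
      ← ENNReal.ofReal_pow hR, ← ENNReal.ofReal_mul (by positivity),
      ENNReal.toReal_ofReal (by positivity)]
    ring
  have hfermi := mul_integral_le_integral_norm_sq_mul (volume : Measure (EuclideanSpace ℝ (Fin 3)))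
    hR (fun _ ↦ hf_nonneg _) (fun _ ↦ hf_le _) hf_comp hwf_comp hsaturated
  rw [finrank_euclideanSpace_fin, hmass_comp, henergy_comp] at hfermi
  convert hfermi using 2
  norm_num

theorem mul_rpow_three_halves_le_of_le {θ₀ ρ e₀ R : ℝ} (hR : 0 < R)
    (hθρ : θ₀ * ρ = 4 * π / 3 * R ^ 3) (he : 3 / 10 * R ^ 2 ≤ e₀) :
    θ₀ * ρ * (3 / (4 * π * e₀)) ^ ((3 : ℝ) / 2) ≤ 5 / 3 * √(10 / π) := by
  have he₀ : 0 < e₀ := lt_of_lt_of_le (by positivity) he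
  have hX : 3 / (4 * π * e₀) ≤ 10 / (4 * π * R ^ 2) := by
    rw [div_le_div_iff₀ (by positivity) (by positivity)]
    nlinarith [pi_pos]
  have hsqrt : √(10 / (4 * π * R ^ 2)) = √(10 / π) / (2 * R) := by
    rw [show 10 / (4 * π * R ^ 2) = 10 / π / (2 * R) ^ 2 by field_simp; ring,
      sqrt_div' _ (by positivity), sqrt_sq (by positivity)]
  have hsqrt3 : √(10 / π) ^ 3 = 10 / π * √(10 / π) := by
    rw [pow_succ, sq_sqrt (by positivity)]
  calc θ₀ * ρ * (3 / (4 * π * e₀)) ^ ((3 : ℝ) / 2)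
      ≤ 4 * π / 3 * R ^ 3 * (10 / (4 * π * R ^ 2)) ^ ((3 : ℝ) / 2) := by
        rw [hθρ]; gcongr
    _ = 4 * π / 3 * R ^ 3 * √(10 / (4 * π * R ^ 2)) ^ 3 := by
        rw [sqrt_eq_rpow, ← rpow_mul_natCast (by positivity)]; norm_num
    _ = 5 / 3 * √(10 / π) := by
        rw [hsqrt, div_pow, hsqrt3]; field_simp; ring

theorem fermi_pauli_bound_general (θ₀ ρ e₀ : ℝ) (hθ : 0 < θ₀) (hρ : 0 < ρ) (he : 0 < e₀)
    (f : (Fin 3 → ℝ) → ℝ) (hf_nonneg : ∀ v, 0 ≤ f v) (hf_int : Integrable f)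
    (hf_bound : ∀ v, f v ≤ 1 / θ₀)
    (hmass : ∫ v, f v = ρ)
    (henergy : ∫ v : Fin 3 → ℝ, (∑ d, (v d) ^ 2) * f v = 2 * ρ * e₀) :
    θ₀ * ρ * (3 / (4 * π * e₀)) ^ ((3 : ℝ) / 2) ≤ (5 / 3) * Real.sqrt (10 / π) := by
  obtain ⟨R, hR, hθρ⟩ : ∃ R : ℝ, 0 < R ∧ θ₀ * ρ = 4 * π / 3 * R ^ 3 := by
    refine ⟨(3 * (θ₀ * ρ) / (4 * π)) ^ ((3 : ℕ)⁻¹ : ℝ), by positivity, ?_⟩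
    rw [rpow_inv_natCast_pow (by positivity) three_ne_zero]
    field_simp
  have hwf : Integrable (fun v : Fin 3 → ℝ ↦ (∑ d, v d ^ 2) * f v) :=
    Integrable.of_integral_ne_zero (by rw [henergy]; positivity)
  have hsaturated : ∫ v, f v = 1 / θ₀ * (4 * π / 3 * R ^ 3) := by
    rw [hmass, ← hθρ]; field_simp
  have hfermi := three_fifths_mul_sq_mul_integral_le_integral_sum_sq_mul hR.le hf_nonneg
    hf_bound hf_int hwf hsaturated
  rw [hmass, henergy] at hfermi
  exact mul_rpow_three_halves_le_of_le hR hθρ (by nlinarith)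

theorem fermi_pauli_bound (θ₀ ρ e₀ : ℝ) (hθ : 0 < θ₀) (hρ : 0 < ρ) (he : 0 < e₀)
    (f : (Fin 3 → ℝ) → ℝ) (hf_nonneg : ∀ v, 0 ≤ f v) (hf_int : Integrable f)
    (hf_bound : ∀ v, f v ≤ 1 / θ₀)
    (hmass : ∫ v, f v = ρ)
    (hmom : ∀ d : Fin 3, ∫ v : Fin 3 → ℝ, v d * f v = 0)
    (henergy : ∫ v : Fin 3 → ℝ, (∑ d, (v d) ^ 2) * f v = 2 * ρ * e₀) :
    θ₀ * ρ * (3 / (4 * π * e₀)) ^ ((3 : ℝ) / 2) ≤ (5 / 3) * Real.sqrt (10 / π) :=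
  fermi_pauli_bound_general θ₀ ρ e₀ hθ hρ he f hf_nonneg hf_int hf_bound hmass henergy
end

section
/- The function B(y) = (Li_{3/2}(y))^{5/2} / (Li_{5/2}(y))^{3/2} is monotonically non-decreasing on (0, 1], where Li_s(y) = ∑_{k=1}^∞ y^k/k^s. -/
open Real

lemma li_summable {s y : ℝ} (hs : 1 < s) (hy0 : 0 ≤ y) (hy1 : y ≤ 1) :
    Summable (fun k : ℕ => y ^ (k+1) / ((k + 1 : ℕ) : ℝ) ^ s) := by
  have h0 : Summable (fun n : ℕ => 1 / (n:ℝ) ^ s) := Real.summable_one_div_nat_rpow.mpr hs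
  have h1 : Summable (fun n : ℕ => 1 / ((n + 1 : ℕ) : ℝ) ^ s) :=
    (summable_nat_add_iff 1).mpr h0
  refine h1.of_nonneg_of_le (fun k => by positivity) (fun k => ?_)
  gcongr
  exact pow_le_one₀ hy0 hy1

lemma rpow_five_halves {w : ℝ} (hw : 0 < w) : w ^ ((5:ℝ)/2) = w ^ ((3:ℝ)/2) * w := by
  rw [show (5:ℝ)/2 = 3/2 + 1 by norm_num, Real.rpow_add hw, Real.rpow_one]

-- denominator comparison: for j ≤ k,
-- 1/((j+1)^{3/2} (k+1)^{5/2}) ≤ 1/((k+1)^{3/2} (j+1)^{5/2})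
lemma denom_le {j k : ℕ} (hjk : j ≤ k) :
    1 / (((j + 1 : ℕ) : ℝ) ^ ((3:ℝ)/2) * ((k + 1 : ℕ) : ℝ) ^ ((5:ℝ)/2)) ≤
      1 / (((k + 1 : ℕ) : ℝ) ^ ((3:ℝ)/2) * ((j + 1 : ℕ) : ℝ) ^ ((5:ℝ)/2)) := by
  have hx : (0:ℝ) < ((j + 1 : ℕ) : ℝ) := by positivity
  have hz : (0:ℝ) < ((k + 1 : ℕ) : ℝ) := by positivity
  have hxz : ((j + 1 : ℕ) : ℝ) ≤ ((k + 1 : ℕ) : ℝ) := by exact_mod_cast by omega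
  rw [rpow_five_halves hx, rpow_five_halves hz]
  have hpx : (0:ℝ) < ((j + 1 : ℕ) : ℝ) ^ ((3:ℝ)/2) := Real.rpow_pos_of_pos hx _
  have hpz : (0:ℝ) < ((k + 1 : ℕ) : ℝ) ^ ((3:ℝ)/2) := Real.rpow_pos_of_pos hz _
  apply one_div_le_one_div_of_le
  · positivity
  · nlinarith [mul_le_mul_of_nonneg_left hxz (le_of_lt (mul_pos hpx hpz))]

lemma mono_monomial {y1 y2 : ℝ} (h1 : 0 ≤ y1) (h12 : y1 ≤ y2) {j k : ℕ} (hjk : j ≤ k) :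
    y2 ^ (j+1) * y1 ^ (k+1) ≤ y1 ^ (j+1) * y2 ^ (k+1) := by
  obtain ⟨d, hd⟩ : ∃ d, k + 1 = (j + 1) + d := ⟨k - j, by omega⟩
  have h2 : (0:ℝ) ≤ y2 := h1.trans h12
  have e1 : y1 ^ (k+1) = y1 ^ (j+1) * y1 ^ d := by rw [hd, pow_add]
  have e2 : y2 ^ (k+1) = y2 ^ (j+1) * y2 ^ d := by rw [hd, pow_add]
  have h3 : y1 ^ d ≤ y2 ^ d := pow_le_pow_left₀ h1 h12 d
  have h4 : (0:ℝ) ≤ y1 ^ (j+1) * y2 ^ (j+1) := by positivity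
  rw [e1, e2]
  nlinarith [mul_le_mul_of_nonneg_left h3 h4]

section core
variable {y1 y2 : ℝ}

private noncomputable def FF (y : ℝ) (j : ℕ) : ℝ := y ^ (j+1) / ((j + 1 : ℕ) : ℝ) ^ ((3:ℝ)/2)
private noncomputable def GG (y : ℝ) (k : ℕ) : ℝ := y ^ (k+1) / ((k + 1 : ℕ) : ℝ) ^ ((5:ℝ)/2)

lemma core_ineq (h1 : 0 < y1) (h12 : y1 ≤ y2) (j k : ℕ) :
    FF y1 j * GG y2 k + FF y1 k * GG y2 j ≤ FF y2 j * GG y1 k + FF y2 k * GG y1 j := by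
  have main : ∀ j k : ℕ, j ≤ k →
      FF y1 j * GG y2 k + FF y1 k * GG y2 j ≤ FF y2 j * GG y1 k + FF y2 k * GG y1 j := by
    intro j k hjk
    have hu := denom_le hjk
    have hv := mono_monomial h1.le h12 hjk
    have frm : ∀ a b c d : ℝ, a / b * (c / d) = a * c * (1 / (b * d)) := fun a b c d => by
      rw [div_mul_div_comm, div_eq_mul_one_div]
    simp only [FF, GG, frm]
    nlinarith [mul_nonneg (sub_nonneg.2 hv) (sub_nonneg.2 hu)]
  rcases le_total j k with h | h
  · exact main j k h
  · linarith [main k j h]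

end core

lemma key_ineq {y1 y2 : ℝ} (h1 : 0 < y1) (h12 : y1 ≤ y2) (h2 : y2 ≤ 1) :
    Li (3/2) y1 * Li (5/2) y2 ≤ Li (3/2) y2 * Li (5/2) y1 := by
  have hy1 : y1 ≤ 1 := h12.trans h2
  have h1' : (0:ℝ) ≤ y1 := h1.le
  have h2' : (0:ℝ) ≤ y2 := h1'.trans h12
  have hF1 : Summable (FF y1) := li_summable (by norm_num) h1' hy1
  have hF2 : Summable (FF y2) := li_summable (by norm_num) h2' h2
  have hG1 : Summable (GG y1) := li_summable (by norm_num) h1' hy1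
  have hG2 : Summable (GG y2) := li_summable (by norm_num) h2' h2
  have eF1 : Li (3/2) y1 = ∑' j, FF y1 j := rfl
  have eF2 : Li (3/2) y2 = ∑' j, FF y2 j := rfl
  have eG1 : Li (5/2) y1 = ∑' j, GG y1 j := rfl
  have eG2 : Li (5/2) y2 = ∑' j, GG y2 j := rfl
  -- rewrite each side times two as a single tsum
  have expand : ∀ (a b : ℝ → ℕ → ℝ) (ya yb : ℝ), Summable (a ya) → Summable (b yb) →
      (∑' j, (a ya j * (∑' k, b yb k) + (∑' k, a ya k) * b yb j)) =
        2 * ((∑' j, a ya j) * (∑' k, b yb k)) := by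
    intro a b ya yb ha hb
    rw [Summable.tsum_add (ha.mul_right _) (hb.mul_left _), tsum_mul_right, tsum_mul_left]
    ring
  -- pointwise (in j) inequality between the summands
  have ptwise : ∀ j, FF y1 j * (∑' k, GG y2 k) + (∑' k, FF y1 k) * GG y2 j ≤
      FF y2 j * (∑' k, GG y1 k) + (∑' k, FF y2 k) * GG y1 j := by
    intro j
    have L : FF y1 j * (∑' k, GG y2 k) + (∑' k, FF y1 k) * GG y2 j
        = ∑' k, (FF y1 j * GG y2 k + FF y1 k * GG y2 j) := by
      rw [Summable.tsum_add (hG2.mul_left _) (hF1.mul_right _), tsum_mul_left, tsum_mul_right]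
    have R : FF y2 j * (∑' k, GG y1 k) + (∑' k, FF y2 k) * GG y1 j
        = ∑' k, (FF y2 j * GG y1 k + FF y2 k * GG y1 j) := by
      rw [Summable.tsum_add (hG1.mul_left _) (hF2.mul_right _), tsum_mul_left, tsum_mul_right]
    rw [L, R]
    exact Summable.tsum_le_tsum (fun k => core_ineq h1 h12 j k)
      ((hG2.mul_left _).add (hF1.mul_right _)) ((hG1.mul_left _).add (hF2.mul_right _))
  have big := Summable.tsum_le_tsum ptwise
    ((hF1.mul_right _).add (hG2.mul_left _)) ((hF2.mul_right _).add (hG1.mul_left _))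
  rw [expand FF GG y1 y2 hF1 hG2, expand FF GG y2 y1 hF2 hG1] at big
  rw [eF1, eF2, eG1, eG2]
  linarith

lemma Li_pos {s y : ℝ} (hs : 1 < s) (h0 : 0 < y) (h1 : y ≤ 1) : 0 < Li s y := by
  have hsum := li_summable hs h0.le h1
  have h := Summable.le_tsum hsum 0 (fun i _ => by positivity)
  have e : y ^ (0+1) / ((0 + 1 : ℕ) : ℝ) ^ s = y := by
    norm_num
  rw [e] at h
  exact lt_of_lt_of_le h0 h

lemma Li_mono {y1 y2 : ℝ} (h1 : 0 < y1) (h12 : y1 ≤ y2) (h2 : y2 ≤ 1) :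
    Li (3/2) y1 ≤ Li (3/2) y2 := by
  refine Summable.tsum_le_tsum (fun k => ?_) (li_summable (by norm_num) h1.le (h12.trans h2))
    (li_summable (by norm_num) (h1.le.trans h12) h2)
  gcongr

theorem bose_fugacity_function_monotone :
    MonotoneOn (fun y : ℝ => (Li (3 / 2) y) ^ ((5 : ℝ) / 2) / (Li (5 / 2) y) ^ ((3 : ℝ) / 2))
      (Set.Ioc (0 : ℝ) 1) := by
  intro y1 hy1 y2 hy2 hle
  obtain ⟨h1, h1'⟩ := hy1
  obtain ⟨h2, h2'⟩ := hy2
  have hf1 : 0 < Li (3/2) y1 := Li_pos (by norm_num) h1 h1'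
  have hf2 : 0 < Li (3/2) y2 := Li_pos (by norm_num) h2 h2'
  have hg1 : 0 < Li (5/2) y1 := Li_pos (by norm_num) h1 h1'
  have hg2 : 0 < Li (5/2) y2 := Li_pos (by norm_num) h2 h2'
  have ratio : Li (3/2) y1 / Li (5/2) y1 ≤ Li (3/2) y2 / Li (5/2) y2 := by
    rw [div_le_div_iff₀ hg1 hg2]
    exact key_ineq h1 hle h2'
  have id : ∀ a b : ℝ, 0 < a → 0 < b →
      a ^ ((5:ℝ)/2) / b ^ ((3:ℝ)/2) = a * (a / b) ^ ((3:ℝ)/2) := by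
    intro a b ha hb
    rw [Real.div_rpow ha.le hb.le, rpow_five_halves ha]
    ring
  simp only
  rw [id _ _ hf1 hg1, id _ _ hf2 hg2]
  have hr2 : (Li (3/2) y1 / Li (5/2) y1) ^ ((3:ℝ)/2) ≤ (Li (3/2) y2 / Li (5/2) y2) ^ ((3:ℝ)/2) :=
    Real.rpow_le_rpow (by positivity) ratio (by norm_num)
  exact mul_le_mul (Li_mono h1 hle h2') hr2 (by positivity) hf2.le
end
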